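/- Let 𝔽₂ be the free group on two generators with word-length function l, let γ ∈ 𝔽₂ and set m = l(γ). Then for all n, n′ ≥ m (with n, n′ ≥ 1): (∑_{κ ∈ W_n} (l(γκ) − n)²)·card(W_{n′}) = (∑_{κ ∈ W_{n′}} (l(γκ) − n′)²)·card(W_n), i.e. the ratio r_{n,γ} = ∑_{κ∈W_n} |l(γκ) − l(κ)|² / card(W_n) is the same for all n ≥ m. (Only the first m letters of a word κ ∈ W_n influence possible cancellations in γκ; this common value R_m is the eigenvalue of the Laplacian of the spectral triple on C*_r(𝔽₂) on the eigenspace spanned by {λ_γ : l(γ) = m}.) -/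

import Mathlib

/-!
Reducing `γ * κ` cancels a suffix of the reduced word of `γ` against a prefix of that of `κ`, so
when `l γ ≤ l κ` and `γ * κ ≠ 1` the reduced word of `γ * κ` still ends with the last letter of
`κ`. Hence each of the `2 |α| - 1` one-letter extensions `κ x` of a nontrivial reduced word `κ`
raises both `l κ` and `l (γ * κ)` by one, and for `n ≥ max (l γ) 1` passing from the sphere `W n` to
`W (n + 1)` multiplies both the sum of `(l (γ * κ) - l κ) ^ 2` and the cardinality by `2 |α| - 1`.
-/

open Finset

namespace FreeGroup

variable {α : Type*}

theorem isReduced_append_singleton_iff {L : List (α × Bool)} {x : α × Bool} :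
    IsReduced (L ++ [x]) ↔ IsReduced L ∧ ∀ a ∈ L.getLast?, a.1 = x.1 → a.2 = x.2 := by
  simp [IsReduced, List.isChain_append]

variable [DecidableEq α]

theorem IsReduced.exists_reduce_append {k : List (α × Bool)} :
    ∀ {g : List (α × Bool)}, IsReduced g → IsReduced k →
      ∃ p c q, g = p ++ invRev c ∧ k = c ++ q ∧ reduce (g ++ k) = p ++ q := by
  induction k with
  | nil => exact fun {g} hg _ ↦ ⟨g, [], [], by simp, rfl, by simpa using hg.reduce_eq⟩
  | cons b k ih =>
    intro g hg hk
    rcases g.eq_nil_or_concat with rfl | ⟨g, a, rfl⟩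
    · exact ⟨[], [], b :: k, rfl, rfl, hk.reduce_eq⟩
    rw [List.concat_eq_append] at hg ⊢
    by_cases hab : a.1 = b.1 → a.2 = b.2
    · have hred : IsReduced (g ++ [a] ++ b :: k) :=
        hg.append_overlap (isReduced_cons_cons.2 ⟨hab, hk⟩) (List.cons_ne_nil _ _)
      exact ⟨g ++ [a], [], b :: k, by simp, rfl, hred.reduce_eq⟩
    · have ha : a = (b.1, !b.2) := by
        obtain ⟨a₁, a₂⟩ := a; obtain ⟨b₁, b₂⟩ := b
        push Not at hab
        obtain ⟨rfl, h⟩ := hab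
        simpa [Bool.eq_not] using h
      obtain ⟨p, c, q, rfl, rfl, hpq⟩ :=
        ih (hg.infix ⟨[], [a], rfl⟩) (hk.infix ⟨[b], [], by simp⟩)
      refine ⟨p, b :: c, q, by simp [ha, invRev], rfl, ?_⟩
      rw [← hpq, ha, List.append_assoc, List.singleton_append]
      exact reduce.Step.eq Red.Step.not_rev

theorem exists_toWord_mul (x y : FreeGroup α) :
    ∃ p c q, x.toWord = p ++ invRev c ∧ y.toWord = c ++ q ∧ (x * y).toWord = p ++ q := by
  simpa [toWord_mul] using isReduced_toWord.exists_reduce_append (isReduced_toWord (x := y))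

theorem getLast?_toWord_mul {x y : FreeGroup α} (hxy : norm x ≤ norm y) (hne : x * y ≠ 1) :
    (x * y).toWord.getLast? = y.toWord.getLast? := by
  obtain ⟨p, c, q, hx, hy, hmul⟩ := exists_toWord_mul x y
  rcases eq_or_ne q [] with rfl | hq
  · have hp : p = [] := by
      simp only [norm, hx, hy, List.length_append, invRev_length, List.append_nil] at hxy
      exact List.length_eq_zero_iff.1 (by omega)
    exact absurd (toWord_eq_nil_iff.1 (by simp [hmul, hp])) hne
  · rw [hmul, hy, List.getLast?_append_of_ne_nil _ hq, List.getLast?_append_of_ne_nil _ hq]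

theorem toWord_mul_mk_singleton {y : FreeGroup α} {x : α × Bool}
    (h : IsReduced (y.toWord ++ [x])) : (y * mk [x]).toWord = y.toWord ++ [x] := by
  rw [toWord_mul, toWord_mk, reduce_singleton, h.reduce_eq]

theorem norm_mul_mk_singleton {y : FreeGroup α} {x : α × Bool}
    (h : IsReduced (y.toWord ++ [x])) : norm (y * mk [x]) = norm y + 1 := by
  simp [norm, toWord_mul_mk_singleton h]

theorem norm_mul_mul_mk_singleton {γ κ : FreeGroup α} {x : α × Bool}
    (hγ : norm γ ≤ norm κ) (hx : IsReduced (κ.toWord ++ [x])) :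
    norm (γ * (κ * mk [x])) = norm (γ * κ) + 1 := by
  rw [← mul_assoc]
  by_cases hne : γ * κ = 1
  · simp [hne, norm, toWord_mk]
  · apply norm_mul_mk_singleton
    rw [isReduced_append_singleton_iff] at hx ⊢
    exact ⟨isReduced_toWord, getLast?_toWord_mul hγ hne ▸ hx.2⟩

def displacement (γ κ : FreeGroup α) : ℤ := norm (γ * κ) - norm κ

theorem displacement_mul_mk_singleton {γ κ : FreeGroup α} {x : α × Bool}
    (hγ : norm γ ≤ norm κ) (hx : IsReduced (κ.toWord ++ [x])) :
    displacement γ (κ * mk [x]) = displacement γ κ := by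
  simp only [displacement, norm_mul_mul_mk_singleton hγ hx, norm_mul_mk_singleton hx]
  push_cast
  ring

theorem exists_mul_mk_singleton_eq {κ' : FreeGroup α} {n : ℕ} (h : norm κ' = n + 1) :
    ∃ κ x, norm κ = n ∧ IsReduced (κ.toWord ++ [x]) ∧ κ * mk [x] = κ' := by
  rcases κ'.toWord.eq_nil_or_concat with hnil | ⟨L, x, hL⟩
  · simp [norm, hnil] at h
  rw [List.concat_eq_append] at hL
  have hred : IsReduced (L ++ [x]) := hL ▸ isReduced_toWord
  have hLw : (mk L).toWord = L := by
    rw [toWord_mk, (hred.infix ⟨[], [x], by simp⟩).reduce_eq]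
  refine ⟨mk L, x, ?_, by rwa [hLw], ?_⟩
  · simpa [norm, hL, hLw] using h
  · rw [mul_mk, ← hL, mk_toWord]

theorem finite_setOf_norm_eq [Finite α] (n : ℕ) : {κ : FreeGroup α | norm κ = n}.Finite :=
  (List.finite_length_eq (α × Bool) n).preimage toWord_injective.injOn

noncomputable def sphere [Finite α] (n : ℕ) : Finset (FreeGroup α) :=
  (finite_setOf_norm_eq n).toFinset

theorem mem_sphere [Finite α] {κ : FreeGroup α} {n : ℕ} : κ ∈ sphere n ↔ norm κ = n := by
  simp [sphere]

section Sphere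

variable [Fintype α]

open Classical in
noncomputable def extensions (κ : FreeGroup α) : Finset (α × Bool) :=
  {x | IsReduced (κ.toWord ++ [x])}

theorem mem_extensions {κ : FreeGroup α} {x : α × Bool} :
    x ∈ extensions κ ↔ IsReduced (κ.toWord ++ [x]) := by
  simp [extensions]

theorem card_extensions {κ : FreeGroup α} (hκ : κ ≠ 1) :
    #(extensions κ) = 2 * Fintype.card α - 1 := by
  obtain ⟨a, ha⟩ := Option.ne_none_iff_exists'.1
    (mt List.getLast?_eq_none_iff.1 (mt toWord_eq_nil_iff.1 hκ))
  have : extensions κ = univ.erase (a.1, !a.2) := by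
    ext ⟨x₁, x₂⟩
    simp only [mem_extensions, isReduced_append_singleton_iff, ha, Option.mem_def,
      Option.some.injEq, forall_eq', mem_erase, mem_univ, and_true, ne_eq, Prod.mk.injEq]
    cases a.2 <;> cases x₂ <;> simp [isReduced_toWord, eq_comm]
  rw [this, card_erase_of_mem (mem_univ _), card_univ, Fintype.card_prod, Fintype.card_bool,
    mul_comm]

theorem sum_sphere_succ {M : Type*} [AddCommMonoid M] (f : FreeGroup α → M) (n : ℕ) :
    ∑ κ ∈ sphere (n + 1), f κ = ∑ κ ∈ sphere n, ∑ x ∈ extensions κ, f (κ * mk [x]) := by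
  rw [sum_sigma']
  symm
  refine sum_nbij (fun p ↦ p.1 * mk [p.2]) ?_ ?_ ?_ (fun _ _ ↦ rfl)
  · rintro ⟨κ, x⟩ hp
    simp only [mem_sigma, mem_sphere, mem_extensions] at hp
    simp [mem_sphere, norm_mul_mk_singleton hp.2, hp.1]
  · rintro ⟨κ₁, x₁⟩ hp₁ ⟨κ₂, x₂⟩ hp₂ heq
    simp only [coe_sigma, Set.mem_sigma_iff, mem_coe, mem_extensions] at hp₁ hp₂
    have hw := congrArg toWord heq
    simp only [toWord_mul_mk_singleton hp₁.2, toWord_mul_mk_singleton hp₂.2] at hw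
    obtain ⟨h₁, h₂⟩ := List.append_inj' hw rfl
    rw [toWord_injective h₁, List.singleton_inj.1 h₂]
  · intro κ' hκ'
    obtain ⟨κ, x, hκ, hx, rfl⟩ := exists_mul_mk_singleton_eq (mem_sphere.1 hκ')
    exact ⟨⟨κ, x⟩, by simpa [mem_sphere, mem_extensions] using ⟨hκ, hx⟩, rfl⟩

theorem sum_sphere_succ_displacement {M : Type*} [AddCommMonoid M] (f : ℤ → M)
    (γ : FreeGroup α) {n : ℕ} (hn : 1 ≤ n) (hγ : norm γ ≤ n) :
    ∑ κ ∈ sphere (n + 1), f (displacement γ κ) =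
      (2 * Fintype.card α - 1) • ∑ κ ∈ sphere n, f (displacement γ κ) := by
  rw [sum_sphere_succ, smul_sum]
  refine sum_congr rfl fun κ hκ ↦ ?_
  rw [mem_sphere] at hκ
  have hκ1 : κ ≠ 1 := by rintro rfl; simp at hκ; omega
  rw [← card_extensions hκ1, ← sum_const]
  refine sum_congr rfl fun x hx ↦ ?_
  rw [displacement_mul_mk_singleton (hκ ▸ hγ) (mem_extensions.1 hx)]

theorem sum_sphere_add_displacement {M : Type*} [AddCommMonoid M] (f : ℤ → M)
    (γ : FreeGroup α) {n : ℕ} (hn : 1 ≤ n) (hγ : norm γ ≤ n) (k : ℕ) :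
    ∑ κ ∈ sphere (n + k), f (displacement γ κ) =
      (2 * Fintype.card α - 1) ^ k • ∑ κ ∈ sphere n, f (displacement γ κ) := by
  induction k with
  | zero => simp
  | succ k ih =>
    rw [← add_assoc, sum_sphere_succ_displacement f γ (by omega) (by omega), ih, smul_smul,
      pow_succ']

end Sphere

end FreeGroup

open FreeGroup

/-- In the free group `𝔽₂` on two generators with word-length
function `l`, let `γ ∈ 𝔽₂`, `m = l γ`. For all `n, n' ≥ max(m, 1)`:
`(∑_{κ ∈ W_n} (l(γκ) - n)²)·card(W_{n'}) = (∑_{κ ∈ W_{n'}} (l(γκ) - n')²)·card(W_n)`,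
i.e. the ratio `r_{n,γ}` is the same for all `n ≥ m`. -/
theorem freeGroup_two_ratio_stabilizes
    (γ : FreeGroup (Fin 2)) (n n' : ℕ) (hn : 1 ≤ n) (hn' : 1 ≤ n')
    (hmn : FreeGroup.norm γ ≤ n) (hmn' : FreeGroup.norm γ ≤ n')
    (hfin : {κ : FreeGroup (Fin 2) | FreeGroup.norm κ = n}.Finite)
    (hfin' : {κ : FreeGroup (Fin 2) | FreeGroup.norm κ = n'}.Finite) :
    (∑ κ ∈ hfin.toFinset, ((FreeGroup.norm (γ * κ) : ℝ) - (n : ℝ)) ^ 2) *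
        (hfin'.toFinset.card : ℝ) =
      (∑ κ ∈ hfin'.toFinset, ((FreeGroup.norm (γ * κ) : ℝ) - (n' : ℝ)) ^ 2) *
        (hfin.toFinset.card : ℝ) := by
  have hsphere (m : ℕ) (h : {κ : FreeGroup (Fin 2) | norm κ = m}.Finite) :
      h.toFinset = sphere m := rfl
  have hsum (m : ℕ) : ∑ κ ∈ sphere m, (((γ * κ).norm : ℝ) - m) ^ 2 =
      ∑ κ ∈ sphere m, (displacement γ κ : ℝ) ^ 2 :=
    sum_congr rfl fun κ hκ ↦ by simp [displacement, mem_sphere.1 hκ]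
  rw [hsphere, hsphere, hsum, hsum]
  wlog hle : n ≤ n' generalizing n n'
  · exact (this n' n hn' hn hmn' hmn hfin' hfin (le_of_not_ge hle)).symm
  obtain ⟨k, rfl⟩ := Nat.exists_eq_add_of_le hle
  have hS := sum_sphere_add_displacement (fun d : ℤ ↦ (d : ℝ) ^ 2) γ hn hmn k
  have hC := sum_sphere_add_displacement (fun _ ↦ (1 : ℝ)) γ hn hmn k
  simp only [sum_const, nsmul_eq_mul, mul_one] at hS hC
  rw [hS, hC]
  ring
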